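/- For every n ≥ 2 and every k with 0 ≤ k ≤ L_{2n−3}: if d is the base-phi expansion of L_{2n−2} + k and e is the base-phi expansion of L_{2n+1} + L_{2n−2} + k, then e(i) = d(i) for all i with −2n+4 ≤ i ≤ 2n−4, e(2n+1) = 1, e(2n) = e(2n−1) = 0, e(2n−2) = 1, e(2n−3) = 0, e(−2n+3) = e(−2n+2) = 0, e(−2n+1) = 1, e(−2n) = e(−2n−1) = 0, e(−2n−2) = 1, and e(i) = 0 for i > 2n+1 and for i < −2n−2. (This is the recursion β(L_{2n+1}+L_{2n−2}+k) = 10010(10)^{-1}β(L_{2n−2}+k)(01)^{-1}001001 on the interval J_n.) -/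

import Mathlib

/-- The golden mean φ = (1+√5)/2. -/
noncomputable def phi : ℝ := (1 + Real.sqrt 5) / 2

/-- `d : ℤ → ℕ` is a base-phi expansion of `N`: finitely supported, digits at most 1,
no two consecutive digits equal 1, and `∑ d i * φ^i = N`. -/
def IsBasePhi (N : ℕ) (d : ℤ → ℕ) : Prop :=
  {i : ℤ | d i ≠ 0}.Finite ∧ (∀ i, d i ≤ 1) ∧ (∀ i, d i * d (i + 1) = 0) ∧
    ∑' i : ℤ, (d i : ℝ) * phi ^ i = (N : ℝ)

/-- The Lucas numbers: L 0 = 2, L 1 = 1, L (n+2) = L (n+1) + L n. -/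
def Lucas : ℕ → ℕ
  | 0 => 2
  | 1 => 1
  | n + 2 => Lucas (n + 1) + Lucas n

noncomputable def psi : ℝ := (1 - Real.sqrt 5) / 2

lemma sqrt5_sq : Real.sqrt 5 ^ 2 = 5 := Real.sq_sqrt (by norm_num)

lemma sqrt5_gt : 2 < Real.sqrt 5 := by
  nlinarith [sqrt5_sq, Real.sqrt_nonneg 5]

lemma phi_sq : phi ^ 2 = phi + 1 := by
  unfold phi; nlinarith [sqrt5_sq]

lemma psi_sq : psi ^ 2 = psi + 1 := by
  unfold psi; nlinarith [sqrt5_sq]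

lemma one_lt_phi : 1 < phi := by unfold phi; nlinarith [sqrt5_gt]

lemma phi_pos : 0 < phi := lt_trans one_pos one_lt_phi

lemma phi_ne_zero : phi ≠ 0 := ne_of_gt phi_pos

lemma psi_neg : psi < 0 := by unfold psi; nlinarith [sqrt5_gt]

lemma psi_ne_zero : psi ≠ 0 := ne_of_lt psi_neg

lemma psi_eq : psi = -phi⁻¹ := by
  have h : phi * psi = -1 := by unfold phi psi; nlinarith [sqrt5_sq]
  have hp := phi_ne_zero
  field_simp
  linarith [h]

lemma phi_zpow_pos (i : ℤ) : 0 < phi ^ i := zpow_pos phi_pos i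

lemma phi_zpow_lt {i j : ℤ} (h : i < j) : phi ^ i < phi ^ j :=
  zpow_lt_zpow_right₀ one_lt_phi h

lemma phi_zpow_le {i j : ℤ} (h : i ≤ j) : phi ^ i ≤ phi ^ j :=
  zpow_le_zpow_right₀ (le_of_lt one_lt_phi) h

lemma phi_zpow_lt_iff {i j : ℤ} (h : phi ^ i < phi ^ j) : i < j := by
  by_contra hc
  exact absurd h (not_lt.mpr (phi_zpow_le (not_lt.mp hc)))

lemma psi_zpow_even {m : ℤ} (h : Even m) : psi ^ m = phi ^ (-m) := by
  rw [psi_eq, Even.neg_zpow h, inv_zpow, ← zpow_neg]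

lemma psi_zpow_odd {m : ℤ} (h : Odd m) : psi ^ m = -phi ^ (-m) := by
  rw [psi_eq, Odd.neg_zpow h, inv_zpow, ← zpow_neg]

-- φ^{j+1} + φ^j = φ^{j+2}
lemma phi_zpow_rec (j : ℤ) : phi ^ (j + 1) + phi ^ j = phi ^ (j + 2) := by
  have h1 : phi ^ (j + 1) = phi ^ j * phi := by rw [zpow_add₀ phi_ne_zero, zpow_one]
  have h2 : phi ^ (j + 2) = phi ^ j * phi ^ (2 : ℕ) := by
    rw [zpow_add₀ phi_ne_zero, zpow_ofNat]
  rw [h1, h2, phi_sq]; ring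

-- φ^{j} - φ^{j-2} = φ^{j-1}  i.e.  φ^{j+1} = φ^{j+2} - φ^{j}
lemma phi_irr : Irrational phi := by
  have h5 : Irrational (Real.sqrt 5) := (by norm_num : Nat.Prime 5).irrational_sqrt
  have : Irrational (1 + Real.sqrt 5) := by
    simpa using h5.ratCast_add 1
  have := this.ratCast_mul (q := 1/2) (by norm_num)
  have he : phi = (1/2 : ℚ) * (1 + Real.sqrt 5) := by unfold phi; push_cast; ring
  rwa [he]

def NoConsec (s : Finset ℤ) : Prop := ∀ i ∈ s, i + 1 ∉ s

lemma noConsec_subset {s t : Finset ℤ} (h : t ⊆ s) (hs : NoConsec s) : NoConsec t :=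
  fun i hi hi1 => hs i (h hi) (h hi1)

lemma sum_phi_lt (n : ℕ) : ∀ s : Finset ℤ, s.card = n → NoConsec s → ∀ m : ℤ, (∀ i ∈ s, i ≤ m) →
    ∑ i ∈ s, phi ^ i < phi ^ (m + 1) := by
  induction n using Nat.strong_induction_on with
  | _ n ih =>
    intro s hcard hnc m hm
    rcases s.eq_empty_or_nonempty with rfl | hne
    · simpa using phi_zpow_pos (m + 1)
    · set M := s.max' hne with hM
      have hMs : M ∈ s := s.max'_mem hne
      have hMm : M ≤ m := hm M hMs
      have hsplit : ∑ i ∈ s.erase M, phi ^ i + phi ^ M = ∑ i ∈ s, phi ^ i :=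
        Finset.sum_erase_add s _ hMs
      have hcard' : (s.erase M).card < n := by
        rw [← hcard]; exact Finset.card_erase_lt_of_mem hMs
      have hnc' : NoConsec (s.erase M) := noConsec_subset (s.erase_subset M) hnc
      have hbound : ∀ i ∈ s.erase M, i ≤ M - 2 := by
        intro i hi
        have his : i ∈ s := Finset.mem_of_mem_erase hi
        have hiM : i ≠ M := Finset.ne_of_mem_erase hi
        have hle : i ≤ M := s.le_max' i his
        have : i ≠ M - 1 := by
          intro h
          exact hnc i his (by rw [h]; simpa using hMs)
        omega
      have hrec := ih _ hcard' (s.erase M) rfl hnc' (M - 2) hbound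
      have h1 : phi ^ (M - 2 + 1) + phi ^ M ≤ phi ^ (M + 1) := by
        have := phi_zpow_rec (M - 1)
        have e1 : M - 1 + 1 = M := by ring
        have e2 : M - 2 + 1 = M - 1 := by ring
        have e3 : M - 1 + 2 = M + 1 := by ring
        rw [e1, e3] at this
        rw [e2]
        linarith
      calc ∑ i ∈ s, phi ^ i = ∑ i ∈ s.erase M, phi ^ i + phi ^ M := hsplit.symm
        _ < phi ^ (M - 2 + 1) + phi ^ M := by linarith [hrec]
        _ ≤ phi ^ (M + 1) := h1
        _ ≤ phi ^ (m + 1) := phi_zpow_le (by omega)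

lemma sum_phi_ge {s : Finset ℤ} {m : ℤ} (hm : m ∈ s) : phi ^ m ≤ ∑ i ∈ s, phi ^ i :=
  Finset.single_le_sum (fun i _ => le_of_lt (phi_zpow_pos i)) hm

lemma sum_phi_pos {s : Finset ℤ} (h : s.Nonempty) : 0 < ∑ i ∈ s, phi ^ i :=
  Finset.sum_pos (fun i _ => phi_zpow_pos i) h

lemma phi_rec' (a b c : ℤ) (h1 : a + 1 = c) (h2 : b + 2 = c) : phi ^ a + phi ^ b = phi ^ c := by
  have h := phi_zpow_rec b
  rw [show b + 1 = a by omega, h2] at h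
  exact h

lemma sum_psi_bounds (n : ℕ) : ∀ s : Finset ℤ, s.card = n → NoConsec s → ∀ m : ℤ, m ∈ s →
    (∀ i ∈ s, m ≤ i) →
    (Even m → phi ^ (-(m+1)) ≤ ∑ i ∈ s, psi ^ i ∧ ∑ i ∈ s, psi ^ i ≤ phi ^ (1-m)) ∧
    (Odd m → ∑ i ∈ s, psi ^ i ≤ -phi ^ (-(m+1)) ∧ -phi ^ (1-m) ≤ ∑ i ∈ s, psi ^ i) := by
  induction n using Nat.strong_induction_on with
  | _ n ih =>
    intro s hcard hnc m hms hm
    have hsplit : ∑ i ∈ s.erase m, psi ^ i + psi ^ m = ∑ i ∈ s, psi ^ i :=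
      Finset.sum_erase_add s _ hms
    rcases (s.erase m).eq_empty_or_nonempty with hemp | hne
    · have hsum : ∑ i ∈ s, psi ^ i = psi ^ m := by rw [← hsplit, hemp]; simp
      constructor
      · intro hev
        rw [hsum, psi_zpow_even hev]
        exact ⟨phi_zpow_le (by omega), phi_zpow_le (by omega)⟩
      · intro hod
        rw [hsum, psi_zpow_odd hod]
        refine ⟨by nlinarith [phi_zpow_le (show -(m+1) ≤ -m by omega)],
          by nlinarith [phi_zpow_le (show -m ≤ 1 - m by omega)]⟩
    · set m' := (s.erase m).min' hne with hm'def
      have hm's : m' ∈ s.erase m := (s.erase m).min'_mem hne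
      have hm'mem : m' ∈ s := Finset.mem_of_mem_erase hm's
      have hm'ne : m' ≠ m := Finset.ne_of_mem_erase hm's
      have hm'gt : m < m' := lt_of_le_of_ne (hm m' hm'mem) (Ne.symm hm'ne)
      have hm1 : m + 1 ∉ s := hnc m hms
      have hm'2 : m + 2 ≤ m' := by
        rcases lt_or_ge m' (m+2) with h | h
        · exfalso; have : m' = m + 1 := by omega
          exact hm1 (this ▸ hm'mem)
        · exact h
      have hcard' : (s.erase m).card < n := by
        rw [← hcard]; exact Finset.card_erase_lt_of_mem hms
      have hnc' : NoConsec (s.erase m) := noConsec_subset (s.erase_subset m) hnc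
      have hminb : ∀ i ∈ s.erase m, m' ≤ i := fun i hi => (s.erase m).min'_le i hi
      have hrec := ih _ hcard' (s.erase m) rfl hnc' m' hm's hminb
      set T' := ∑ i ∈ s.erase m, psi ^ i with hT'
      rcases Int.even_or_odd m with hev | hod
      · -- m even
        have hpsim : psi ^ m = phi ^ (-m) := psi_zpow_even hev
        refine ⟨fun _ => ?_, fun hod' => absurd hev (Int.not_even_iff_odd.mpr hod')⟩
        rcases Int.even_or_odd m' with hev' | hod'
        · have hb := hrec.1 hev'
          have h1 : phi ^ (1 - m') ≤ phi ^ (-(m+1)) := phi_zpow_le (by omega)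
          have h2 : (0:ℝ) < phi ^ (-(m'+1)) := phi_zpow_pos _
          have hid : phi ^ (-m) + phi ^ (-(m+1)) = phi ^ (1-m) :=
            phi_rec' (-m) (-(m+1)) (1-m) (by ring) (by ring)
          constructor
          · have : phi ^ (-(m+1)) ≤ phi ^ (-m) := phi_zpow_le (by omega)
            linarith [hsplit, hb.1]
          · linarith [hsplit, hb.2]
        · have hb := hrec.2 hod'
          have hm'3 : m + 3 ≤ m' := by
            rcases hev with ⟨a, ha⟩; rcases hod' with ⟨b, hb2⟩; omega
          have h1 : phi ^ (1 - m') ≤ phi ^ (-(m+2)) := phi_zpow_le (by omega)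
          have hid : phi ^ (-(m+1)) + phi ^ (-(m+2)) = phi ^ (-m) :=
            phi_rec' (-(m+1)) (-(m+2)) (-m) (by ring) (by ring)
          have h2 : (0:ℝ) < phi ^ (-(m'+1)) := phi_zpow_pos _
          constructor
          · linarith [hsplit, hb.2]
          · have h3 : phi ^ (-m) ≤ phi ^ (1-m) := phi_zpow_le (by omega)
            linarith [hsplit, hb.1]
      · -- m odd
        have hpsim : psi ^ m = -phi ^ (-m) := psi_zpow_odd hod
        refine ⟨fun hev' => absurd hev' (Int.not_even_iff_odd.mpr hod), fun _ => ?_⟩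
        rcases Int.even_or_odd m' with hev' | hod'
        · have hb := hrec.1 hev'
          have hm'3 : m + 3 ≤ m' := by
            rcases hod with ⟨a, ha⟩; rcases hev' with ⟨b, hb2⟩; omega
          have h1 : phi ^ (1 - m') ≤ phi ^ (-(m+2)) := phi_zpow_le (by omega)
          have hid : phi ^ (-(m+1)) + phi ^ (-(m+2)) = phi ^ (-m) :=
            phi_rec' (-(m+1)) (-(m+2)) (-m) (by ring) (by ring)
          have h2 : (0:ℝ) < phi ^ (-(m'+1)) := phi_zpow_pos _
          constructor
          · linarith [hsplit, hb.2]
          · have h3 : phi ^ (-m) ≤ phi ^ (1-m) := phi_zpow_le (by omega)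
            linarith [hsplit, hb.1]
        · have hb := hrec.2 hod'
          have h1 : phi ^ (1 - m') ≤ phi ^ (-(m+1)) := phi_zpow_le (by omega)
          have h2 : (0:ℝ) < phi ^ (-(m'+1)) := phi_zpow_pos _
          have hid : phi ^ (-m) + phi ^ (-(m+1)) = phi ^ (1-m) :=
            phi_rec' (-m) (-(m+1)) (1-m) (by ring) (by ring)
          constructor
          · have : phi ^ (-(m+1)) ≤ phi ^ (-m) := phi_zpow_le (by omega)
            linarith [hsplit, hb.1]
          · linarith [hsplit, hb.2]

lemma unique_finset (n : ℕ) : ∀ s t : Finset ℤ, s.card = n → NoConsec s → NoConsec t →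
    ∑ i ∈ s, phi ^ i = ∑ i ∈ t, phi ^ i → s = t := by
  induction n using Nat.strong_induction_on with
  | _ n ih =>
    intro s t hcard hncs hnct hsum
    rcases s.eq_empty_or_nonempty with rfl | hnes
    · rcases t.eq_empty_or_nonempty with rfl | hnet
      · rfl
      · exfalso
        have := sum_phi_pos hnet
        rw [← hsum] at this; simp at this
    · rcases t.eq_empty_or_nonempty with rfl | hnet
      · exfalso
        have := sum_phi_pos hnes
        rw [hsum] at this; simp at this
      · set M := s.max' hnes with hM
        set M' := t.max' hnet with hM'
        have hMs : M ∈ s := s.max'_mem hnes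
        have hM's : M' ∈ t := t.max'_mem hnet
        have hub_s := sum_phi_lt s.card s rfl hncs M (fun i hi => s.le_max' i hi)
        have hub_t := sum_phi_lt t.card t rfl hnct M' (fun i hi => t.le_max' i hi)
        have hlb_s := sum_phi_ge hMs
        have hlb_t := sum_phi_ge hM's
        have hMeq : M = M' := by
          have h1 : phi ^ M < phi ^ (M' + 1) := by rw [hsum] at hlb_s; linarith
          have h2 : phi ^ M' < phi ^ (M + 1) := by rw [← hsum] at hlb_t; linarith
          have := phi_zpow_lt_iff h1
          have := phi_zpow_lt_iff h2
          omega
        have hsplit_s : ∑ i ∈ s.erase M, phi ^ i + phi ^ M = ∑ i ∈ s, phi ^ i :=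
          Finset.sum_erase_add s _ hMs
        have hsplit_t : ∑ i ∈ t.erase M, phi ^ i + phi ^ M = ∑ i ∈ t, phi ^ i := by
          rw [hMeq]; exact Finset.sum_erase_add t _ hM's
        have hcard' : (s.erase M).card < n := by
          rw [← hcard]; exact Finset.card_erase_lt_of_mem hMs
        have heq : s.erase M = t.erase M := by
          apply ih _ hcard' _ _ rfl (noConsec_subset (s.erase_subset M) hncs)
            (noConsec_subset (t.erase_subset M) hnct)
          have : ∑ i ∈ s.erase M, phi ^ i = ∑ i ∈ t.erase M, phi ^ i := by
            rw [hsum] at hsplit_s; linarith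
          exact this
        have : M' ∈ s := by rw [← hMeq] at hM's ⊢; exact hMs
        apply Finset.ext
        intro a
        constructor
        · intro ha
          rcases eq_or_ne a M with rfl | hne
          · rw [hMeq]; exact hM's
          · have : a ∈ s.erase M := Finset.mem_erase.mpr ⟨hne, ha⟩
            rw [heq] at this; exact Finset.mem_of_mem_erase this
        · intro ha
          rcases eq_or_ne a M with rfl | hne
          · exact hMs
          · have : a ∈ t.erase M := Finset.mem_erase.mpr ⟨hne, ha⟩
            rw [← heq] at this; exact Finset.mem_of_mem_erase this

lemma zpow_phi_psi (i : ℤ) : ∃ a b : ℤ, phi ^ i = a * phi + b ∧ psi ^ i = a * psi + b := by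
  induction i using Int.induction_on with
  | zero => exact ⟨0, 1, by simp, by simp⟩
  | succ k ihk =>
    obtain ⟨a, b, h1, h2⟩ := ihk
    refine ⟨a + b, a, ?_, ?_⟩
    · have h : phi ^ ((k : ℤ) + 1) = phi ^ (k : ℤ) * phi := by
        rw [zpow_add₀ phi_ne_zero, zpow_one]
      rw [h, h1]; push_cast; linear_combination (a:ℝ) * phi_sq
    · have h : psi ^ ((k : ℤ) + 1) = psi ^ (k : ℤ) * psi := by
        rw [zpow_add₀ psi_ne_zero, zpow_one]
      rw [h, h2]; push_cast; linear_combination (a:ℝ) * psi_sq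
  | pred k ihk =>
    obtain ⟨a, b, h1, h2⟩ := ihk
    refine ⟨b, a - b, ?_, ?_⟩
    · have he : phi ^ (-(k : ℤ) - 1) * phi = phi ^ (-(k:ℤ)) := by
        rw [← zpow_add_one₀ phi_ne_zero]; norm_num
      have hphi : phi * (phi - 1) = 1 := by nlinarith [phi_sq]
      have hinv : phi ^ (-(k:ℤ) - 1) = phi ^ (-(k:ℤ)) * (phi - 1) := by
        calc phi ^ (-(k:ℤ) - 1) = phi ^ (-(k:ℤ) - 1) * (phi * (phi - 1)) := by rw [hphi, mul_one]
          _ = (phi ^ (-(k:ℤ) - 1) * phi) * (phi - 1) := by ring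
          _ = phi ^ (-(k:ℤ)) * (phi - 1) := by rw [he]
      rw [hinv, h1]; push_cast; linear_combination (a:ℝ) * phi_sq
    · have he : psi ^ (-(k : ℤ) - 1) * psi = psi ^ (-(k:ℤ)) := by
        rw [← zpow_add_one₀ psi_ne_zero]; norm_num
      have hpsi : psi * (psi - 1) = 1 := by nlinarith [psi_sq]
      have hinv : psi ^ (-(k:ℤ) - 1) = psi ^ (-(k:ℤ)) * (psi - 1) := by
        calc psi ^ (-(k:ℤ) - 1) = psi ^ (-(k:ℤ) - 1) * (psi * (psi - 1)) := by rw [hpsi, mul_one]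
          _ = (psi ^ (-(k:ℤ) - 1) * psi) * (psi - 1) := by ring
          _ = psi ^ (-(k:ℤ)) * (psi - 1) := by rw [he]
      rw [hinv, h2]; push_cast; linear_combination (a:ℝ) * psi_sq

lemma conj_sum (s : Finset ℤ) : ∃ a b : ℤ,
    ∑ i ∈ s, phi ^ i = a * phi + b ∧ ∑ i ∈ s, psi ^ i = a * psi + b := by
  induction s using Finset.induction_on with
  | empty => exact ⟨0, 0, by simp, by simp⟩
  | @insert i t hni ih =>
    obtain ⟨a, b, h1, h2⟩ := ih
    obtain ⟨c, e, hc1, hc2⟩ := zpow_phi_psi i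
    refine ⟨c + a, e + b, ?_, ?_⟩
    · rw [Finset.sum_insert hni, h1, hc1]; push_cast; ring
    · rw [Finset.sum_insert hni, h2, hc2]; push_cast; ring

lemma eval_int {a b : ℤ} {N : ℕ} (h : (a : ℝ) * phi + b = N) : a = 0 ∧ b = N := by
  have ha : a = 0 := by
    by_contra hne
    apply phi_irr
    refine ⟨((N : ℚ) - b) / a, ?_⟩
    have : (a : ℝ) ≠ 0 := Int.cast_ne_zero.mpr hne
    push_cast
    field_simp
    linarith [h]
  refine ⟨ha, ?_⟩
  rw [ha] at h
  push_cast at h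
  exact_mod_cast (by linarith : (b:ℝ) = N)

/-- The ψ-sum of the expansion of an integer equals the integer too. -/
lemma psi_sum_eq {s : Finset ℤ} {N : ℕ} (h : ∑ i ∈ s, phi ^ i = N) :
    ∑ i ∈ s, psi ^ i = N := by
  obtain ⟨a, b, h1, h2⟩ := conj_sum s
  rw [h1] at h
  obtain ⟨ha, hb⟩ := eval_int h
  rw [h2, ha, hb]; push_cast; ring

/-- Bridge from IsBasePhi to a support finset. -/
lemma isBasePhi_finset {N : ℕ} {d : ℤ → ℕ} (hd : IsBasePhi N d) :
    ∃ s : Finset ℤ, (∀ i, d i ≠ 0 ↔ i ∈ s) ∧ NoConsec s ∧ ∑ i ∈ s, phi ^ i = (N : ℝ) := by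
  obtain ⟨hfin, hle, hnc, hsum⟩ := hd
  refine ⟨hfin.toFinset, fun i => by simp, ?_, ?_⟩
  · intro i hi hi1
    simp only [Set.Finite.mem_toFinset, Set.mem_setOf_eq] at hi hi1
    have := hnc i
    rcases Nat.mul_eq_zero.mp this with h | h
    · exact hi h
    · exact hi1 h
  · have hv : ∀ i ∉ hfin.toFinset, (d i : ℝ) * phi ^ i = 0 := by
      intro i hi
      simp only [Set.Finite.mem_toFinset, Set.mem_setOf_eq, not_not] at hi
      rw [hi]; simp
    rw [tsum_eq_sum hv] at hsum
    rw [← hsum]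
    apply Finset.sum_congr rfl
    intro i hi
    simp only [Set.Finite.mem_toFinset, Set.mem_setOf_eq] at hi
    have h1 : d i = 1 := by have := hle i; omega
    rw [h1]; simp

/-- Uniqueness of base-phi expansions. -/
lemma isBasePhi_unique {N : ℕ} {d e : ℤ → ℕ} (hd : IsBasePhi N d) (he : IsBasePhi N e) :
    ∀ i, d i = e i := by
  obtain ⟨s, hs, hncs, hsums⟩ := isBasePhi_finset hd
  obtain ⟨t, ht, hnct, hsumt⟩ := isBasePhi_finset he
  have hst : s = t := unique_finset s.card s t rfl hncs hnct (by rw [hsums, hsumt])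
  intro i
  by_cases h : i ∈ s
  · have h1 : d i = 1 := by have := hd.2.1 i; have := (hs i).mpr h; omega
    have h2 : e i = 1 := by have := he.2.1 i; have := (ht i).mpr (hst ▸ h); omega
    rw [h1, h2]
  · have h1 : d i = 0 := by by_contra hc; exact h ((hs i).mp hc)
    have h2 : e i = 0 := by
      by_contra hc; exact h (hst ▸ (ht i).mp hc)
    rw [h1, h2]

lemma lucas_real : ∀ m : ℕ, (Lucas m : ℝ) = phi ^ m + psi ^ m
  | 0 => by norm_num [Lucas]
  | 1 => by norm_num [Lucas, phi, psi]
  | (m + 2) => by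
    rw [Lucas]
    push_cast
    rw [lucas_real (m + 1), lucas_real m]
    have h1 : phi ^ (m + 2) = phi ^ m * phi ^ 2 := by ring
    have h2 : psi ^ (m + 2) = psi ^ m * psi ^ 2 := by ring
    rw [h1, h2, phi_sq, psi_sq]
    ring

/-- Structure of the support of the expansion of N when φ^p < N < φ^(p+1), p even. -/
lemma support_bounds {p : ℤ} (hp2 : 2 ≤ p) (hpe : Even p) {N : ℕ} {s : Finset ℤ}
    (hnc : NoConsec s) (hsum : ∑ i ∈ s, phi ^ i = (N : ℝ))
    (hlo : phi ^ p < (N : ℝ)) (hhi : (N : ℝ) < phi ^ (p + 1)) :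
    p ∈ s ∧ -p ∈ s ∧ ∀ i ∈ s, -p ≤ i ∧ i ≤ p := by
  have hne : s.Nonempty := by
    rcases s.eq_empty_or_nonempty with rfl | h
    · exfalso; simp at hsum
      have := phi_zpow_pos p
      rw [← hsum] at hlo; linarith
    · exact h
  -- max
  set M := s.max' hne with hM
  have hMs : M ∈ s := s.max'_mem hne
  have hub := sum_phi_lt s.card s rfl hnc M (fun i hi => s.le_max' i hi)
  have hlb := sum_phi_ge hMs
  rw [hsum] at hub hlb
  have hMp : M = p := by
    have h1 := phi_zpow_lt_iff (lt_of_le_of_lt hlb hhi)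
    have h2 := phi_zpow_lt_iff (lt_of_lt_of_le hlo (le_of_lt hub))
    omega
  -- min
  set m := s.min' hne with hm
  have hms : m ∈ s := s.min'_mem hne
  have hpsi := psi_sum_eq hsum
  have hbd := sum_psi_bounds s.card s rfl hnc m hms (fun i hi => s.min'_le i hi)
  rw [hpsi] at hbd
  have hmeven : Even m := by
    rcases Int.even_or_odd m with h | h
    · exact h
    · exfalso
      have := (hbd.2 h).1
      have h2 : (0:ℝ) < phi ^ (-(m+1)) := phi_zpow_pos _
      have h3 : (0:ℝ) < phi ^ p := phi_zpow_pos p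
      linarith
  obtain ⟨hbl, hbu⟩ := hbd.1 hmeven
  have hmp : m = -p := by
    have h1 : p < 1 - m := phi_zpow_lt_iff (lt_of_lt_of_le hlo hbu)
    have h2 : -(m+1) < p + 1 := phi_zpow_lt_iff (lt_of_le_of_lt hbl hhi)
    rcases hmeven with ⟨a, ha⟩; rcases hpe with ⟨c, hc⟩
    omega
  exact ⟨hMp ▸ hMs, hmp ▸ hms, fun i hi => ⟨hmp ▸ s.min'_le i hi, hMp ▸ s.le_max' i hi⟩⟩

/-- Recursion on `J_n`: `β(L_{2n+1}+L_{2n-2}+k) = 10010(10)^{-1} β(L_{2n-2}+k) (01)^{-1} 001001`. -/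
theorem recursion_Jn (n : ℕ) (hn : 2 ≤ n) (k : ℕ) (hk : k ≤ Lucas (2 * n - 3))
    (d e : ℤ → ℕ)
    (hd : IsBasePhi (Lucas (2 * n - 2) + k) d)
    (he : IsBasePhi (Lucas (2 * n + 1) + Lucas (2 * n - 2) + k) e) :
    (∀ i : ℤ, -(2 * n : ℤ) + 4 ≤ i → i ≤ 2 * (n : ℤ) - 4 → e i = d i) ∧
    e (2 * (n : ℤ) + 1) = 1 ∧ e (2 * (n : ℤ)) = 0 ∧ e (2 * (n : ℤ) - 1) = 0 ∧
    e (2 * (n : ℤ) - 2) = 1 ∧ e (2 * (n : ℤ) - 3) = 0 ∧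
    e (-(2 * n : ℤ) + 3) = 0 ∧ e (-(2 * n : ℤ) + 2) = 0 ∧ e (-(2 * n : ℤ) + 1) = 1 ∧
    e (-(2 * n : ℤ)) = 0 ∧ e (-(2 * n : ℤ) - 1) = 0 ∧ e (-(2 * n : ℤ) - 2) = 1 ∧
    (∀ i : ℤ, 2 * (n : ℤ) + 1 < i → e i = 0) ∧
    (∀ i : ℤ, i < -(2 * n : ℤ) - 2 → e i = 0) := by
  set p : ℤ := 2 * (n : ℤ) - 2 with hp_def
  have hp2 : 2 ≤ p := by omega
  have hpe : Even p := ⟨(n : ℤ) - 1, by omega⟩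
  set N : ℕ := Lucas (2 * n - 2) + k with hN_def
  -- cast facts for Lucas values
  have hq1 : ((2 * n - 2 : ℕ) : ℤ) = p := by omega
  have hq2 : ((2 * n - 1 : ℕ) : ℤ) = p + 1 := by omega
  have hq3 : ((2 * n + 1 : ℕ) : ℤ) = p + 3 := by omega
  have hL1 : (Lucas (2 * n - 2) : ℝ) = phi ^ p + phi ^ (-p) := by
    rw [lucas_real, ← zpow_natCast phi, ← zpow_natCast psi, hq1,
      psi_zpow_even hpe]
  have hL2 : (Lucas (2 * n - 1) : ℝ) = phi ^ (p + 1) - phi ^ (-(p + 1)) := by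
    rw [lucas_real, ← zpow_natCast phi, ← zpow_natCast psi, hq2,
      psi_zpow_odd ⟨(n : ℤ) - 1, by omega⟩]
    ring
  have hL3 : (Lucas (2 * n + 1) : ℝ) = phi ^ (p + 3) - phi ^ (-(p + 3)) := by
    rw [lucas_real, ← zpow_natCast phi, ← zpow_natCast psi, hq3,
      psi_zpow_odd ⟨(n : ℤ), by omega⟩]
    ring
  obtain ⟨s, hs, hncs, hsums⟩ := isBasePhi_finset hd
  -- lower and upper bounds on N
  have hlo : phi ^ p < (N : ℝ) := by
    have h1 : (N : ℝ) = (Lucas (2 * n - 2) : ℝ) + k := by rw [hN_def]; push_cast; ring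
    have := phi_zpow_pos (-p)
    have hk0 : (0 : ℝ) ≤ k := Nat.cast_nonneg k
    rw [h1, hL1]; linarith
  have hLrec : Lucas (2 * n - 1) = Lucas (2 * n - 2) + Lucas (2 * n - 3) := by
    have h1 : 2 * n - 1 = (2 * n - 3) + 2 := by omega
    rw [h1, Lucas]
    have h2 : 2 * n - 3 + 1 = 2 * n - 2 := by omega
    rw [h2]
  have hhi : (N : ℝ) < phi ^ (p + 1) := by
    have h1 : N ≤ Lucas (2 * n - 1) := by omega
    have h2 : (N : ℝ) ≤ (Lucas (2 * n - 1) : ℝ) := Nat.cast_le.mpr h1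
    have := phi_zpow_pos (-(p + 1))
    rw [hL2] at h2; linarith
  obtain ⟨hps, hmps, hbound⟩ := support_bounds hp2 hpe hncs hsums hlo hhi
  -- middle part of the support
  set s_mid : Finset ℤ := (s.erase p).erase (-p) with hsmid_def
  have hsmid_sub : ∀ i ∈ s_mid, -p + 2 ≤ i ∧ i ≤ p - 2 := by
    intro i hi
    have hi1 : i ≠ -p := Finset.ne_of_mem_erase hi
    have hi2 : i ∈ s.erase p := Finset.mem_of_mem_erase hi
    have hi3 : i ≠ p := Finset.ne_of_mem_erase hi2
    have hi4 : i ∈ s := Finset.mem_of_mem_erase hi2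
    have hi5 := hbound i hi4
    have hi6 : i ≠ p - 1 := by
      intro h
      exact hncs i hi4 (by rw [h]; simpa using hps)
    have hi7 : i ≠ -p + 1 := by
      intro h
      have := hncs (-p) hmps
      rw [← h] at this
      exact this hi4
    omega
  have hsmid_s : s_mid ⊆ s := fun i hi =>
    Finset.mem_of_mem_erase (Finset.mem_of_mem_erase hi)
  -- split the sum over s
  have hmps' : -p ∈ s.erase p := Finset.mem_erase.mpr ⟨by omega, hmps⟩
  have hsum_split : phi ^ p + (phi ^ (-p) + ∑ i ∈ s_mid, phi ^ i) = (N : ℝ) := by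
    rw [← hsums]
    rw [← Finset.insert_erase hps, Finset.sum_insert (Finset.notMem_erase p s),
      ← Finset.insert_erase hmps', Finset.sum_insert (Finset.notMem_erase (-p) (s.erase p))]
  -- the new expansion e'
  set e' : ℤ → ℕ := fun i =>
    if i = p + 3 ∨ i = p ∨ i = -(p + 1) ∨ i = -(p + 4) then 1
    else if -(p - 2) ≤ i ∧ i ≤ p - 2 then d i else 0 with he'_def
  set t : Finset ℤ :=
    insert (p + 3) (insert p (insert (-(p + 1)) (insert (-(p + 4)) s_mid))) with ht_def
  have htmem : ∀ j, j ∈ t ↔ (j = p + 3 ∨ j = p ∨ j = -(p + 1) ∨ j = -(p + 4) ∨ j ∈ s_mid) := by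
    intro j; simp [ht_def, Finset.mem_insert]
  have he'_zero : ∀ i ∉ t, e' i = 0 := by
    intro i hi
    simp only [he'_def]
    split_ifs with h1 h2
    · exfalso; exact hi ((htmem i).mpr (by tauto))
    · by_contra hdi
      have his : i ∈ s := (hs i).mp hdi
      have : i ∈ s_mid := by
        refine Finset.mem_erase.mpr ⟨by omega, Finset.mem_erase.mpr ⟨by omega, his⟩⟩
      exact hi ((htmem i).mpr (Or.inr (Or.inr (Or.inr (Or.inr this)))))
    · rfl
  have he'_one : ∀ i ∈ t, e' i = 1 := by
    intro i hi
    rcases (htmem i).mp hi with h | h | h | h | h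
    · simp only [he'_def]; rw [if_pos (by tauto)]
    · simp only [he'_def]; rw [if_pos (by tauto)]
    · simp only [he'_def]; rw [if_pos (by tauto)]
    · simp only [he'_def]; rw [if_pos (by tauto)]
    · have hb := hsmid_sub i h
      have his : i ∈ s := hsmid_s h
      have hd1 : d i = 1 := by
        have := hd.2.1 i
        have := (hs i).mpr his
        omega
      simp only [he'_def]
      rw [if_neg (by omega), if_pos (by omega), hd1]
  -- e' is a base-phi expansion of the target
  have he'_basephi : IsBasePhi (Lucas (2 * n + 1) + Lucas (2 * n - 2) + k) e' := by
    refine ⟨?_, ?_, ?_, ?_⟩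
    · apply Set.Finite.subset t.finite_toSet
      intro i hi
      simp only [Set.mem_setOf_eq] at hi
      by_contra hc
      exact hi (he'_zero i hc)
    · intro i
      simp only [he'_def]
      split_ifs with h1 h2
      · omega
      · exact hd.2.1 i
      · omega
    · intro i
      by_cases h1 : i = p + 3 ∨ i = p ∨ i = -(p + 1) ∨ i = -(p + 4)
      · have h0 : e' (i + 1) = 0 := by
          simp only [he'_def]
          rw [if_neg (by omega), if_neg (by omega)]
        rw [h0, mul_zero]
      · by_cases h2 : -(p - 2) ≤ i ∧ i ≤ p - 2
        · have hei : e' i = d i := by simp only [he'_def]; rw [if_neg h1, if_pos h2]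
          have h3 : ¬(i + 1 = p + 3 ∨ i + 1 = p ∨ i + 1 = -(p + 1) ∨ i + 1 = -(p + 4)) := by
            omega
          by_cases h4 : -(p - 2) ≤ i + 1 ∧ i + 1 ≤ p - 2
          · have hei1 : e' (i + 1) = d (i + 1) := by
              simp only [he'_def]; rw [if_neg h3, if_pos h4]
            rw [hei, hei1]
            exact hd.2.2.1 i
          · have h0 : e' (i + 1) = 0 := by
              simp only [he'_def]; rw [if_neg h3, if_neg h4]
            rw [h0, mul_zero]
        · have h0 : e' i = 0 := by simp only [he'_def]; rw [if_neg h1, if_neg h2]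
          rw [h0, zero_mul]
    · have hv : ∀ i ∉ t, (e' i : ℝ) * phi ^ i = 0 := by
        intro i hi; rw [he'_zero i hi]; simp
      rw [tsum_eq_sum hv]
      have hsum1 : ∑ i ∈ t, (e' i : ℝ) * phi ^ i = ∑ i ∈ t, phi ^ i := by
        apply Finset.sum_congr rfl
        intro i hi
        rw [he'_one i hi]; simp
      rw [hsum1]
      -- expand the sum over t
      have hm1 : (-(p + 4)) ∉ s_mid := by
        intro h; have := hsmid_sub _ h; omega
      have hm2 : (-(p + 1)) ∉ insert (-(p + 4)) s_mid := by
        intro h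
        rcases Finset.mem_insert.mp h with h | h
        · omega
        · have := hsmid_sub _ h; omega
      have hm3 : p ∉ insert (-(p + 1)) (insert (-(p + 4)) s_mid) := by
        intro h
        rcases Finset.mem_insert.mp h with h | h
        · omega
        · rcases Finset.mem_insert.mp h with h | h
          · omega
          · have := hsmid_sub _ h; omega
      have hm4 : p + 3 ∉ insert p (insert (-(p + 1)) (insert (-(p + 4)) s_mid)) := by
        intro h
        rcases Finset.mem_insert.mp h with h | h
        · omega
        · rcases Finset.mem_insert.mp h with h | h
          · omega
          · rcases Finset.mem_insert.mp h with h | h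
            · omega
            · have := hsmid_sub _ h; omega
      rw [ht_def, Finset.sum_insert hm4, Finset.sum_insert hm3, Finset.sum_insert hm2,
        Finset.sum_insert hm1]
      have hid1 := phi_rec' (-(p + 3)) (-(p + 4)) (-(p + 2)) (by ring) (by ring)
      have hid2 := phi_rec' (-(p + 1)) (-(p + 2)) (-p) (by ring) (by ring)
      have hMcast : ((Lucas (2 * n + 1) + Lucas (2 * n - 2) + k : ℕ) : ℝ)
          = (Lucas (2 * n + 1) : ℝ) + (N : ℝ) := by
        rw [hN_def]; push_cast; ring
      rw [hMcast, hL3]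
      linarith [hsum_split]
  -- uniqueness
  have heq : ∀ i, e i = e' i := isBasePhi_unique he he'_basephi
  refine ⟨?_, ?_, ?_, ?_, ?_, ?_, ?_, ?_, ?_, ?_, ?_, ?_, ?_, ?_⟩
  · intro i hi1 hi2
    rw [heq i]
    simp only [he'_def]
    rw [if_neg (by omega), if_pos (by omega)]
  · rw [heq _]; simp only [he'_def]; split_ifs <;> first | omega | tauto
  · rw [heq _]; simp only [he'_def]; split_ifs <;> first | omega | tauto
  · rw [heq _]; simp only [he'_def]; split_ifs <;> first | omega | tauto
  · rw [heq _]; simp only [he'_def]; split_ifs <;> first | omega | tauto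
  · rw [heq _]; simp only [he'_def]; split_ifs <;> first | omega | tauto
  · rw [heq _]; simp only [he'_def]; split_ifs <;> first | omega | tauto
  · rw [heq _]; simp only [he'_def]; split_ifs <;> first | omega | tauto
  · rw [heq _]; simp only [he'_def]; split_ifs <;> first | omega | tauto
  · rw [heq _]; simp only [he'_def]; split_ifs <;> first | omega | tauto
  · rw [heq _]; simp only [he'_def]; split_ifs <;> first | omega | tauto
  · rw [heq _]; simp only [he'_def]; split_ifs <;> first | omega | tauto
  · intro i hi
    rw [heq i]; simp only [he'_def]; split_ifs <;> first | omega | tauto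
  · intro i hi
    rw [heq i]; simp only [he'_def]; split_ifs <;> first | omega | tauto
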